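/- arXiv:2010.09521 — 2 statements merged into one kernel-verified Lean document; each statement's English description precedes it below -/
import Mathlib

section
/- Fix σ > 0, g > 0, h > 0. At any critical point k₀ > 0 of λ(k) = (σk² + g)/(k·coth(kh)), one has λ''(k₀) > 0; in particular λ has no local maximum at any k₀ > 0. -/
/-!
Write `λ = A · T` with `A k = σ k + g / k` and `T k = tanh (k h)`. Since `T'' T - 2 T'² = -2 h T'`,
at a critical point (`A' T = -A T'`) the product rule gives `T λ'' = A'' T² - 2 h A T'`.
Eliminating `σ k²` with the critical-point equation, the sign of this is that of
`t² + x t (1 - t²) - 2 x² (1 - t²)` with `x = k h`, `t = tanh x`, which is a positive multiple of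
`sinh² u + u sinh u - u² (1 + cosh u)` at `u = 2 x`. Squaring away `cosh u = √(1 + sinh² u)`
reduces that to a polynomial inequality in `u` and `sinh u`, which follows from the Taylor bound
`sinh u ≥ u + u³/6 + u⁵/120`. A positive second derivative at a critical point gives a strict local
minimum, so `λ` cannot have a local maximum there.
-/

open Real Filter Topology

theorem Real.quintic_le_sinh_of_nonneg {x : ℝ} (hx : 0 ≤ x) :
    x + x ^ 3 / 6 + x ^ 5 / 120 ≤ sinh x := by
  have h := sum_le_hasSum (Finset.range 3) (fun n _ => by positivity) (hasSum_sinh x)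
  norm_num [Finset.sum_range_succ, Nat.factorial] at h
  linarith

theorem Real.sq_mul_one_add_cosh_lt {u : ℝ} (hu : 0 < u) :
    u ^ 2 * (1 + cosh u) < sinh u ^ 2 + u * sinh u := by
  have hs : u + u ^ 3 / 6 + u ^ 5 / 120 ≤ sinh u := quintic_le_sinh_of_nonneg hu.le
  have hc : 0 < cosh u := cosh_pos u
  have hcs : cosh u ^ 2 = 1 + sinh u ^ 2 := cosh_sq' u
  generalize sinh u = s at hs hcs ⊢
  generalize cosh u = c at hc hcs ⊢
  have hsu : u < s := by nlinarith [pow_pos hu 3, pow_pos hu 5]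
  have hpoly : u ^ 4 * s < (s + 2 * u) * (s - u) * (s + u) := by
    obtain ⟨d, hd, rfl⟩ : ∃ d ≥ 0, s = u + u ^ 3 / 6 + u ^ 5 / 120 + d :=
      ⟨_, sub_nonneg.2 hs, by ring⟩
    rw [← sub_pos]
    ring_nf
    positivity
  have hfactor : (s ^ 2 + u * s - u ^ 2 - u ^ 2 * c) * (s ^ 2 + u * s - u ^ 2 + u ^ 2 * c)
      = s * ((s + 2 * u) * (s - u) * (s + u) - u ^ 4 * s) := by
    linear_combination (-u ^ 4) * hcs
  have hprod : 0 < (s ^ 2 + u * s - u ^ 2 - u ^ 2 * c) * (s ^ 2 + u * s - u ^ 2 + u ^ 2 * c) := by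
    rw [hfactor]
    exact mul_pos (by linarith) (by linarith)
  have hsum : 0 < s ^ 2 + u * s - u ^ 2 + u ^ 2 * c := by nlinarith
  linarith [pos_of_mul_pos_left hprod hsum.le]

theorem Real.two_mul_sq_mul_one_sub_tanh_sq_lt {x : ℝ} (hx : 0 < x) :
    2 * x ^ 2 * (1 - tanh x ^ 2) < tanh x ^ 2 + x * tanh x * (1 - tanh x ^ 2) := by
  have h := sq_mul_one_add_cosh_lt (mul_pos two_pos hx)
  rw [sinh_two_mul, cosh_two_mul] at h
  have hc := cosh_pos x
  rw [tanh_eq_sinh_div_cosh]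
  field_simp
  rw [cosh_sq_sub_sinh_sq]
  nlinarith [mul_pos hc hx, cosh_sq_sub_sinh_sq x]

theorem Real.tanh_pos {x : ℝ} (hx : 0 < x) : 0 < tanh x := by
  rw [tanh_eq_sinh_div_cosh]
  exact div_pos (sinh_pos_iff.2 hx) (cosh_pos x)

theorem Real.hasDerivAt_tanh (x : ℝ) : HasDerivAt tanh (1 - tanh x ^ 2) x := by
  rw [show tanh = sinh / cosh from funext tanh_eq_sinh_div_cosh]
  refine ((hasDerivAt_sinh x).div (hasDerivAt_cosh x) (cosh_pos x).ne').congr_deriv ?_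
  rw [Pi.div_apply]
  field_simp

theorem deriv_deriv_mul_of_hasDerivAt {𝕜 : Type*} [NontriviallyNormedField 𝕜]
    {u v u' v' : 𝕜 → 𝕜} {x u'' v'' : 𝕜}
    (hu : ∀ᶠ y in 𝓝 x, HasDerivAt u (u' y) y) (hv : ∀ᶠ y in 𝓝 x, HasDerivAt v (v' y) y)
    (hu' : HasDerivAt u' u'' x) (hv' : HasDerivAt v' v'' x) :
    deriv (deriv fun y => u y * v y) x = u'' * v x + 2 * (u' x * v' x) + u x * v'' := by
  have h : deriv (fun y => u y * v y) =ᶠ[𝓝 x] fun y => u' y * v y + u y * v' y :=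
    (hu.and hv).mono fun y hy => (hy.1.mul hy.2).deriv
  rw [h.deriv_eq]
  exact ((hu'.mul hv.self_of_nhds).add (hu.self_of_nhds.mul hv')).deriv.trans (by ring)

theorem not_isLocalMax_of_deriv_deriv_pos {f : ℝ → ℝ} {x₀ : ℝ} (hf : deriv (deriv f) x₀ > 0)
    (hd : deriv f x₀ = 0) (hc : ContinuousAt f x₀) : ¬ IsLocalMax f x₀ := by
  intro hmax
  have hconst : f =ᶠ[𝓝 x₀] fun _ => f x₀ :=
    (hmax.and (isLocalMin_of_deriv_deriv_pos hf hd hc)).mono fun _ h => le_antisymm h.1 h.2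
  rw [hconst.deriv.deriv_eq] at hf
  simp at hf

section Dispersion

variable {σ g h k : ℝ}

theorem hasDerivAt_const_mul_add_div (hk : k ≠ 0) :
    HasDerivAt (fun k => σ * k + g / k) (σ - g / k ^ 2) k := by
  refine (((hasDerivAt_id k).const_mul σ).add ((hasDerivAt_inv hk).const_mul g)).congr_deriv ?_
  simp [div_eq_mul_inv, sub_eq_add_neg]

theorem hasDerivAt_const_sub_div_sq (hk : k ≠ 0) :
    HasDerivAt (fun k => σ - g / k ^ 2) (2 * g / k ^ 3) k := by
  refine ((((hasDerivAt_pow 2 k).inv (pow_ne_zero 2 hk)).const_mul g).const_sub σ).congr_deriv ?_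
  field_simp
  ring

theorem hasDerivAt_tanh_mul (k : ℝ) :
    HasDerivAt (fun k => tanh (k * h)) (h * (1 - tanh (k * h) ^ 2)) k := by
  have hcomp := (hasDerivAt_tanh (k * h)).comp k ((hasDerivAt_id' k).mul_const h)
  exact hcomp.congr_deriv (by ring)

theorem hasDerivAt_mul_one_sub_tanh_mul_sq (k : ℝ) :
    HasDerivAt (fun k => h * (1 - tanh (k * h) ^ 2))
      (-2 * h ^ 2 * tanh (k * h) * (1 - tanh (k * h) ^ 2)) k := by
  refine ((((hasDerivAt_tanh_mul k).pow 2).const_sub 1).const_mul h).congr_deriv ?_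
  ring

theorem dispersion_second_deriv_pos (hg : 0 < g) (hh : 0 < h) (hk : 0 < k)
    (hcrit : (σ - g / k ^ 2) * tanh (k * h) + (σ * k + g / k) * (h * (1 - tanh (k * h) ^ 2)) = 0) :
    0 < 2 * g / k ^ 3 * tanh (k * h) + 2 * ((σ - g / k ^ 2) * (h * (1 - tanh (k * h) ^ 2))) +
      (σ * k + g / k) * (-2 * h ^ 2 * tanh (k * h) * (1 - tanh (k * h) ^ 2)) := by
  have hx : 0 < k * h := mul_pos hk hh
  have hK := two_mul_sq_mul_one_sub_tanh_sq_lt hx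
  set t := tanh (k * h)
  have ht : 0 < t := tanh_pos hx
  have hD : 0 < t + k * h * (1 - t ^ 2) := by nlinarith [tanh_sq_lt_one (k * h)]
  -- `hcrit` enters twice: to trade `A' t` for `-A T'`, and to eliminate `σ k²`.
  have hkey : (2 * g / k ^ 3 * t + 2 * ((σ - g / k ^ 2) * (h * (1 - t ^ 2))) +
      (σ * k + g / k) * (-2 * h ^ 2 * t * (1 - t ^ 2))) * (k ^ 3 * t * (t + k * h * (1 - t ^ 2)))
      = 2 * g * t * (t ^ 2 + k * h * t * (1 - t ^ 2) - 2 * (k * h) ^ 2 * (1 - t ^ 2)) := by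
    linear_combination (norm := skip)
      (2 * k ^ 3 * (t + k * h * (1 - t ^ 2)) * h * (1 - t ^ 2) -
        2 * (k * h) ^ 2 * (1 - t ^ 2) * k ^ 2) * hcrit
    field_simp
    ring
  refine pos_of_mul_pos_left ?_ (by positivity : 0 ≤ k ^ 3 * t * (t + k * h * (1 - t ^ 2)))
  rw [hkey]
  exact mul_pos (by positivity) (by linarith)

end Dispersion

theorem critical_point_second_deriv_pos_general (σ g h : ℝ)
    (hg : g > 0) (hh : h > 0) (lam : ℝ → ℝ)
    (hlam : ∀ k, lam k = (σ * k^2 + g) * Real.tanh (k * h) / k)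
    (k₀ : ℝ) (hk₀ : k₀ > 0) (hcrit : deriv lam k₀ = 0) :
    deriv (deriv lam) k₀ > 0 ∧ ¬ IsLocalMax lam k₀ := by
  have hne : ∀ᶠ k in 𝓝 k₀, k ≠ 0 := eventually_ne_nhds hk₀.ne'
  have hev : lam =ᶠ[𝓝 k₀] fun k => (σ * k + g / k) * tanh (k * h) :=
    hne.mono fun k hk => by rw [hlam]; field_simp
  have hA : ∀ᶠ k in 𝓝 k₀, HasDerivAt (fun k => σ * k + g / k) (σ - g / k ^ 2) k :=
    hne.mono fun k hk => hasDerivAt_const_mul_add_div hk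
  have hT : ∀ᶠ k in 𝓝 k₀, HasDerivAt (fun k => tanh (k * h)) (h * (1 - tanh (k * h) ^ 2)) k :=
    Eventually.of_forall hasDerivAt_tanh_mul
  have hderiv : HasDerivAt (fun k => (σ * k + g / k) * tanh (k * h)) _ k₀ :=
    hA.self_of_nhds.mul hT.self_of_nhds
  have hcrit' : (σ - g / k₀ ^ 2) * tanh (k₀ * h) +
      (σ * k₀ + g / k₀) * (h * (1 - tanh (k₀ * h) ^ 2)) = 0 := by
    rw [← hcrit, hev.deriv_eq, hderiv.deriv]
  have hpos : deriv (deriv lam) k₀ > 0 := by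
    rw [hev.deriv.deriv_eq, deriv_deriv_mul_of_hasDerivAt hA hT
      (hasDerivAt_const_sub_div_sq hk₀.ne') (hasDerivAt_mul_one_sub_tanh_mul_sq k₀)]
    exact dispersion_second_deriv_pos hg hh hk₀ hcrit'
  exact ⟨hpos, not_isLocalMax_of_deriv_deriv_pos hpos hcrit (hderiv.continuousAt.congr hev.symm)⟩

theorem critical_point_second_deriv_pos (σ g h : ℝ)
    (hσ : σ > 0) (hg : g > 0) (hh : h > 0) (lam : ℝ → ℝ)
    (hlam : ∀ k, lam k = (σ * k^2 + g) * Real.tanh (k * h) / k)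
    (k₀ : ℝ) (hk₀ : k₀ > 0) (hcrit : deriv lam k₀ = 0) :
    deriv (deriv lam) k₀ > 0 ∧ ¬ IsLocalMax lam k₀ :=
  critical_point_second_deriv_pos_general σ g h hg hh lam hlam k₀ hk₀ hcrit
end

section
/- Fix h > 0, k > 0, σ > 0, g > 0 with k²σ/g > 1/2. Then for every integer n ≥ 2, (nkσ + g/(kn))·tanh(nkh) ≠ (kσ + g/k)·tanh(kh); i.e., the dispersion equation λ·kn·coth(nkh) − σk²n² − g = 0 has no solution λ common with the n = 1 case. -/
/-!
With `A m = m k σ + g / (k m)`, we have `A n - A 1 = (n - 1) (k σ - g / (k n))`, which is positive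
for `n ≥ 2` exactly because `2 k² σ > g`. Since `tanh` is positive and increasing on `(0, ∞)`,
`A 1 tanh (k h) < A n tanh (k h) ≤ A n tanh (n k h)`.
-/

namespace Real

theorem tanh_strictMono : StrictMono tanh := by
  intro x y hxy
  rw [tanh_eq_sinh_div_cosh, tanh_eq_sinh_div_cosh, div_lt_div_iff₀ (cosh_pos x) (cosh_pos y)]
  have hsinh : 0 < sinh (y - x) := sinh_pos_iff.mpr (sub_pos.mpr hxy)
  rw [sinh_sub] at hsinh
  linarith

theorem tanh_pos_s9 {x : ℝ} (hx : 0 < x) : 0 < tanh x := by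
  simpa using tanh_strictMono hx

end Real

theorem add_lt_mul_add_div {a b t : ℝ} (ht : 1 < t) (hb : b < t * a) :
    a + b < t * a + b / t := by
  have ht₀ : 0 < t := zero_lt_one.trans ht
  have hgap : t * a + b / t - (a + b) = (t - 1) * (a - b / t) := by
    field_simp
    ring
  have hba : b / t < a := by rwa [div_lt_iff₀' ht₀]
  nlinarith [mul_pos (sub_pos.mpr ht) (sub_pos.mpr hba)]

theorem dispersion_no_common_solution (h k σ g : ℝ)
    (hh : h > 0) (hk : k > 0) (hσ : σ > 0) (hg : g > 0)
    (hC : k^2 * σ / g > 1/2) :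
    ∀ n : ℕ, 2 ≤ n →
      ((n : ℝ) * k * σ + g / (k * n)) * Real.tanh (n * k * h) ≠
        (k * σ + g / k) * Real.tanh (k * h) := by
  intro n hn
  have hn₂ : (2 : ℝ) ≤ n := by exact_mod_cast hn
  have hg₂ : g < 2 * (k ^ 2 * σ) := by
    rw [gt_iff_lt, lt_div_iff₀ hg] at hC
    linarith
  have hcoef : k * σ + g / k < n * k * σ + g / (k * n) := by
    rw [mul_assoc, ← div_div]
    refine add_lt_mul_add_div (by linarith) ?_
    rw [div_lt_iff₀ hk]
    nlinarith
  have htanh : Real.tanh (k * h) ≤ Real.tanh (n * k * h) :=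
    Real.tanh_strictMono.monotone (by nlinarith [mul_pos hk hh])
  exact (mul_lt_mul_of_lt_of_le_of_pos_of_nonneg hcoef htanh
    (Real.tanh_pos_s9 (mul_pos hk hh)) (by positivity)).ne'
end
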